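/- Let D : ℂᵈ × ℂ → ℂ be analytic near the origin, and suppose D(ξ, λ) = Δ(ξ, λ) + O(|(ξ,λ)|^{n+2}) where Δ is a homogeneous polynomial of degree n+1 satisfying: for each unit vector ξ̂ ∈ S^{d−1}, the polynomial λ ↦ Δ(ξ̂, λ) has degree exactly n+1 (nonzero leading coefficient). Then for each ξ̂ ∈ S^{d−1} and all sufficiently small ρ > 0, the function λ̂ ↦ ρ^{−(n+1)} D(ρ ξ̂, ρ λ̂), restricted to a fixed large disk, has exactly n+1 zeros (counted with multiplicity), and as ρ → 0 these zeros converge to the n+1 roots of Δ(ξ̂, ·). -/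

import Mathlib

/-!
After rescaling, `λ̂ ↦ ρ^{-(n+1)} D(ρξ̂, ρλ̂)` differs from the polynomial `P = Δ(ξ̂, ·)` of degree
`n + 1` by `O(ρ)` uniformly on any fixed disk, so it suffices to understand holomorphic
perturbations `g` of `P` on a large disk `|z| ≤ S`, with all roots of `P` inside `|z| < R`.
A zero of `g` in `|z| ≤ R` exists by the minimum modulus principle, since `|g|` is large on
`|z| = R` and small at a root of `P`; zeros of `g` lie close to roots of `P` because `|P|` is
bounded below away from its roots. Finally, dividing `g` by `∏ (z - wᵢ)` over `n + 2` zeros `wᵢ`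
and applying the maximum modulus principle on `|z| = S` would make `|g|` of size `O(1/S)` on
`|z| ≤ R`, which is impossible for large `S` since `|g| ≈ |P|` is bounded below on `|z| = R`.
-/

open Metric Polynomial Filter Topology

lemma Set.exists_range_eq_of_forall_finset_card_le {α : Type*} {Z : Set α} {m : ℕ}
    (hne : Z.Nonempty) (hcard : ∀ T : Finset α, ↑T ⊆ Z → T.card ≤ m) :
    ∃ z : Fin m → α, Set.range z = Z := by
  have hfin : Z.Finite := by
    by_contra hinf
    obtain ⟨T, hT, hTcard⟩ := Set.Infinite.exists_subset_card_eq hinf (m + 1)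
    have := hcard T hT
    omega
  have := hfin.fintype
  have : Nonempty Z := hne.to_subtype
  obtain ⟨e⟩ : Nonempty (Z ↪ Fin m) := Function.Embedding.nonempty_of_card_le <| by
    rw [Fintype.card_fin, ← hfin.card_toFinset]
    exact hcard _ (by simp)
  refine ⟨Subtype.val ∘ Function.invFun e, ?_⟩
  rw [Set.range_comp, (Function.invFun_surjective e.injective).range_eq, Set.image_univ,
    Subtype.range_coe]

lemma Polynomial.norm_eval_le_of_one_le_norm {𝕜 : Type*} [NormedField 𝕜] (P : 𝕜[X]) {z : 𝕜}
    (hz : 1 ≤ ‖z‖) : ‖P.eval z‖ ≤ (P.sum fun _ a => ‖a‖) * ‖z‖ ^ P.natDegree := by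
  rw [eval_eq_sum, Polynomial.sum_def, Polynomial.sum_def, Finset.sum_mul]
  refine (norm_sum_le _ _).trans (Finset.sum_le_sum fun e he => ?_)
  rw [norm_mul, norm_pow]
  exact mul_le_mul_of_nonneg_left (pow_le_pow_right₀ hz (le_natDegree_of_mem_supp e he))
    (norm_nonneg _)

lemma Polynomial.exists_pos_forall_isRoot_norm_lt (P : ℂ[X]) (hP : P ≠ 0) :
    ∃ R > 0, ∀ w, P.IsRoot w → ‖w‖ < R := by
  obtain ⟨R, hR, hsub⟩ := (finite_setOfPred_isRoot hP).isBounded.subset_ball_lt 0 0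
  exact ⟨R, hR, fun w hw => mem_ball_zero_iff.1 (hsub hw)⟩

lemma Polynomial.exists_pos_forall_norm_eval_lt (P : ℂ[X]) (R : ℝ) {ε : ℝ} (hε : 0 < ε) :
    ∃ m > 0, ∀ z : ℂ, ‖z‖ ≤ R → ‖P.eval z‖ < m → ∃ w, P.IsRoot w ∧ dist z w < ε := by
  set K : Set ℂ := closedBall 0 R ∩ ⋂ w ∈ {w | P.IsRoot w}, {z | ε ≤ dist z w}
  have hK : IsCompact K := (isCompact_closedBall 0 R).inter_right <|
    isClosed_biInter fun w _ => isClosed_le continuous_const (continuous_id.dist continuous_const)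
  have hpos : ∀ z ∈ K, 0 < ‖P.eval z‖ := by
    intro z hz
    refine norm_pos_iff.2 fun hroot => ?_
    have hzz : ε ≤ dist z z := Set.mem_iInter₂.1 hz.2 z hroot
    linarith [dist_self z]
  obtain ⟨m, hm, hmK⟩ := hK.exists_forall_le' P.continuous.norm.continuousOn hpos
  refine ⟨m, hm, fun z hz hlt => ?_⟩
  by_contra! hfar
  exact (hmK z ⟨mem_closedBall_zero_iff.2 hz, Set.mem_iInter₂.2 hfar⟩).not_gt hlt

lemma exists_eq_prod_sub_mul_of_eq_zero {g : ℂ → ℂ} {U : Set ℂ} (hg : DifferentiableOn ℂ g U)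
    (T : Finset ℂ) (hTU : ∀ w ∈ T, U ∈ 𝓝 w) (hT : ∀ w ∈ T, g w = 0) :
    ∃ h : ℂ → ℂ, DifferentiableOn ℂ h U ∧ ∀ z ∈ U, g z = (∏ w ∈ T, (z - w)) * h z := by
  classical
  induction T using Finset.induction_on with
  | empty => exact ⟨g, hg, fun z _ => by simp⟩
  | insert a T ha ih =>
    obtain ⟨h, hh, hgh⟩ := ih (fun w hw => hTU w (Finset.mem_insert_of_mem hw))
      (fun w hw => hT w (Finset.mem_insert_of_mem hw))
    have haU : U ∈ 𝓝 a := hTU a (Finset.mem_insert_self a T)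
    have hprod : ∏ w ∈ T, (a - w) ≠ 0 :=
      Finset.prod_ne_zero_iff.2 fun w hw => sub_ne_zero.2 fun h => ha (h ▸ hw)
    have ha0 : h a = 0 := by
      have := hgh a (mem_of_mem_nhds haU)
      rw [hT a (Finset.mem_insert_self a T)] at this
      exact (mul_eq_zero.1 this.symm).resolve_left hprod
    refine ⟨dslope h a, (Complex.differentiableOn_dslope haU).2 hh, fun z hz => ?_⟩
    have hsplit : h z = (z - a) * dslope h a z := by
      simpa [ha0] using (sub_smul_dslope h a z).symm
    rw [hgh z hz, hsplit, Finset.prod_insert ha]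
    ring

/-- A Schwarz-lemma-type bound: each zero in the small disk gains a factor `4R/S`. -/
lemma norm_le_of_forall_mem_sphere_norm_le_of_zeros {g : ℂ → ℂ} {R S M : ℝ} (hR : 0 < R)
    (hRS : 2 * R ≤ S) (hg : DifferentiableOn ℂ g (closedBall 0 S))
    (hM : ∀ z ∈ sphere (0 : ℂ) S, ‖g z‖ ≤ M) (T : Finset ℂ)
    (hT : ∀ w ∈ T, ‖w‖ ≤ R ∧ g w = 0) {z : ℂ} (hz : ‖z‖ ≤ R) :
    ‖g z‖ ≤ (4 * R / S) ^ T.card * M := by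
  have hS : 0 < S := by linarith
  obtain ⟨h, hh, hgh⟩ := exists_eq_prod_sub_mul_of_eq_zero hg T
    (fun w hw => closedBall_mem_nhds_of_mem (mem_ball_zero_iff.2 (by linarith [(hT w hw).1])))
    (fun w hw => (hT w hw).2)
  have hnorm : ∀ z ∈ closedBall (0 : ℂ) S, ‖g z‖ = (∏ w ∈ T, ‖z - w‖) * ‖h z‖ := by
    intro z hz
    rw [hgh z hz, norm_mul, norm_prod]
  have hsphere : ∀ z ∈ frontier (ball (0 : ℂ) S), ‖h z‖ ≤ M / (S / 2) ^ T.card := by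
    intro z hz
    rw [frontier_ball 0 hS.ne', mem_sphere_zero_iff_norm] at hz
    have hfar : (S / 2) ^ T.card ≤ ∏ w ∈ T, ‖z - w‖ := by
      rw [← Finset.prod_const]
      exact Finset.prod_le_prod (fun _ _ => by positivity) fun w hw => by
        linarith [norm_sub_norm_le z w, (hT w hw).1]
    rw [le_div_iff₀ (by positivity), mul_comm]
    calc (S / 2) ^ T.card * ‖h z‖ ≤ (∏ w ∈ T, ‖z - w‖) * ‖h z‖ := by gcongr
      _ = ‖g z‖ := (hnorm z (mem_closedBall_zero_iff.2 hz.le)).symm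
      _ ≤ M := hM z (mem_sphere_zero_iff_norm.2 hz)
  have hzS : z ∈ closedBall (0 : ℂ) S := mem_closedBall_zero_iff.2 (by linarith)
  have hhz : ‖h z‖ ≤ M / (S / 2) ^ T.card :=
    Complex.norm_le_of_forall_mem_frontier_norm_le isBounded_ball
      (hh.diffContOnCl_ball subset_rfl) hsphere (by rwa [closure_ball 0 hS.ne'])
  have hnear : ∏ w ∈ T, ‖z - w‖ ≤ (2 * R) ^ T.card := by
    rw [← Finset.prod_const]
    exact Finset.prod_le_prod (fun _ _ => norm_nonneg _) fun w hw => by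
      linarith [norm_sub_le z w, (hT w hw).1]
  calc ‖g z‖ = (∏ w ∈ T, ‖z - w‖) * ‖h z‖ := hnorm z hzS
    _ ≤ (2 * R) ^ T.card * (M / (S / 2) ^ T.card) := by gcongr
    _ = (2 * R / (S / 2)) ^ T.card * M := by
      rw [div_pow (2 * R), div_mul_eq_mul_div, mul_div_assoc]
    _ = (4 * R / S) ^ T.card * M := by congr 2; field_simp; ring

lemma Polynomial.exists_forall_card_le_natDegree (P : ℂ[X]) {R m : ℝ} (hR : 0 < R)
    (hm : 0 < m) {z₀ : ℂ} (hz₀ : ‖z₀‖ ≤ R) (hPz₀ : m ≤ ‖P.eval z₀‖) :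
    ∃ S η : ℝ, R ≤ S ∧ 0 < η ∧ ∀ g : ℂ → ℂ, DifferentiableOn ℂ g (closedBall 0 S) →
      (∀ z ∈ closedBall (0 : ℂ) S, ‖g z - P.eval z‖ ≤ η) →
      ∀ T : Finset ℂ, (∀ w ∈ T, ‖w‖ ≤ R ∧ g w = 0) → T.card ≤ P.natDegree := by
  set N := P.natDegree
  set A := P.sum fun _ a => ‖a‖
  have hA : 0 ≤ A := Finset.sum_nonneg fun _ _ => norm_nonneg _
  -- `S` is large enough that `(4R/S)^(N+1) (A+1) S^N = (4R)^(N+1) (A+1) / S ≤ m/4`.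
  set S := max (4 * R) (max 1 (4 * (4 * R) ^ (N + 1) * (A + 1) / m))
  have h4RS : 4 * R ≤ S := le_max_left _ _
  have hS1 : 1 ≤ S := (le_max_left _ _).trans (le_max_right _ _)
  have hSbig : 4 * (4 * R) ^ (N + 1) * (A + 1) / m ≤ S :=
    (le_max_right _ _).trans (le_max_right _ _)
  have hS : 0 < S := by linarith
  refine ⟨S, min 1 (m / 4), by linarith, by positivity, fun g hg hgP T hT => ?_⟩
  by_contra! hcard
  have hη1 : min 1 (m / 4) ≤ 1 := min_le_left _ _
  have hηm : min 1 (m / 4) ≤ m / 4 := min_le_right _ _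
  have hgS : ∀ z ∈ sphere (0 : ℂ) S, ‖g z‖ ≤ (A + 1) * S ^ N := by
    intro z hz
    have hzS := mem_sphere_zero_iff_norm.1 hz
    have hP := P.norm_eval_le_of_one_le_norm (z := z) (by rw [hzS]; exact hS1)
    have hSN : 1 ≤ S ^ N := one_le_pow₀ hS1
    rw [hzS] at hP
    linarith [norm_le_norm_add_norm_sub' (g z) (P.eval z), hgP z (sphere_subset_closedBall hz)]
  have hsmall : ‖g z₀‖ ≤ (4 * R / S) ^ (N + 1) * ((A + 1) * S ^ N) :=
    (norm_le_of_forall_mem_sphere_norm_le_of_zeros hR (by linarith) hg hgS T hT hz₀).trans <|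
      mul_le_mul_of_nonneg_right (pow_le_pow_of_le_one (by positivity) ((div_le_one hS).2 h4RS)
        hcard) (by positivity)
  have hbound : (4 * R / S) ^ (N + 1) * ((A + 1) * S ^ N) ≤ m / 4 := by
    rw [div_le_iff₀ hm] at hSbig
    rw [div_pow, pow_succ S N]
    field_simp
    nlinarith
  have hlarge : m - m / 4 ≤ ‖g z₀‖ := by
    linarith [norm_le_norm_add_norm_sub (g z₀) (P.eval z₀),
      hgP z₀ (mem_closedBall_zero_iff.2 (hz₀.trans (by linarith)))]
  linarith

lemma DiffContOnCl.exists_eq_zero_of_norm_lt {E : Type*} [NormedAddCommGroup E]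
    [NormedSpace ℂ E] [FiniteDimensional ℂ E] [Nontrivial E] {f : E → ℂ} {U : Set E}
    (hU : Bornology.IsBounded U) (hf : DiffContOnCl ℂ f U) {z₀ : E} (hz₀ : z₀ ∈ closure U)
    (hlt : ∀ z ∈ frontier U, ‖f z₀‖ < ‖f z‖) : ∃ z ∈ closure U, f z = 0 := by
  by_contra! hne
  obtain ⟨w, hw, hmax⟩ := Complex.exists_mem_frontier_isMaxOn_norm hU
    (closure_nonempty_iff.1 ⟨z₀, hz₀⟩) (hf.inv hne)
  have hle : ‖(f z₀)⁻¹‖ ≤ ‖(f w)⁻¹‖ := hmax hz₀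
  rw [norm_inv, norm_inv, inv_le_inv₀ (norm_pos_iff.2 (hne z₀ hz₀))
    (norm_pos_iff.2 (hne w (frontier_subset_closure hw)))] at hle
  exact (hlt w hw).not_ge hle

theorem Polynomial.exists_forall_zeros_near_roots (P : ℂ[X]) (hP : 0 < P.natDegree) {R ε : ℝ}
    (hR : ∀ w, P.IsRoot w → ‖w‖ < R) (hε : 0 < ε) :
    ∃ S η : ℝ, 0 < η ∧ ∀ g : ℂ → ℂ, DifferentiableOn ℂ g (closedBall 0 S) →
      (∀ z ∈ closedBall (0 : ℂ) S, ‖g z - P.eval z‖ ≤ η) →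
      (∃ z, ‖z‖ ≤ R ∧ g z = 0) ∧
      (∀ z, ‖z‖ ≤ R → g z = 0 → ∃ w, P.IsRoot w ∧ dist z w < ε) ∧
      ∀ T : Finset ℂ, (∀ w ∈ T, ‖w‖ ≤ R ∧ g w = 0) → T.card ≤ P.natDegree := by
  obtain ⟨w₀, hw₀⟩ := Complex.exists_root (natDegree_pos_iff_degree_pos.1 hP)
  have hR0 : 0 < R := (norm_nonneg w₀).trans_lt (hR w₀ hw₀)
  obtain ⟨m, hm, hsphere⟩ := (isCompact_sphere (0 : ℂ) R).exists_forall_le'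
    P.continuous.norm.continuousOn (a := 0) fun z hz => norm_pos_iff.2 fun hroot =>
      (hR z hroot).ne (mem_sphere_zero_iff_norm.1 hz)
  obtain ⟨m', hm', hnear⟩ := P.exists_pos_forall_norm_eval_lt R hε
  have hRsphere : (R : ℂ) ∈ sphere (0 : ℂ) R := by simp [hR0.le]
  obtain ⟨S, η, hRS, hη, hcard⟩ := P.exists_forall_card_le_natDegree hR0 hm
    (mem_sphere_zero_iff_norm.1 hRsphere).le (hsphere _ hRsphere)
  set η' := min η (min (m / 4) (m' / 2))
  have hη'η : η' ≤ η := min_le_left _ _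
  have hη'm : η' ≤ m / 4 := (min_le_right _ _).trans (min_le_left _ _)
  have hη'm' : η' ≤ m' / 2 := (min_le_right _ _).trans (min_le_right _ _)
  refine ⟨S, η', by positivity, fun g hg hgP => ?_⟩
  have hgP' : ∀ z, ‖z‖ ≤ R → ‖g z - P.eval z‖ ≤ η' := fun z hz =>
    hgP z (mem_closedBall_zero_iff.2 (hz.trans hRS))
  refine ⟨?_, fun z hz hgz => hnear z hz ?_, hcard g hg fun z hz => (hgP z hz).trans hη'η⟩
  · have hgw₀ : ‖g w₀‖ ≤ η' := by simpa [hw₀.eq_zero] using hgP' w₀ (hR w₀ hw₀).le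
    obtain ⟨z, hz, hgz⟩ := DiffContOnCl.exists_eq_zero_of_norm_lt isBounded_ball
      (hg.diffContOnCl_ball (closedBall_subset_closedBall hRS)) (z₀ := w₀)
      (by rw [closure_ball 0 hR0.ne', mem_closedBall_zero_iff]; exact (hR w₀ hw₀).le)
      fun z hz => by
        rw [frontier_ball 0 hR0.ne'] at hz
        linarith [hsphere z hz, norm_le_norm_add_norm_sub (g z) (P.eval z),
          hgP' z (mem_sphere_zero_iff_norm.1 hz).le]
    rw [closure_ball 0 hR0.ne', mem_closedBall_zero_iff] at hz
    exact ⟨z, hz, hgz⟩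
  · have := hgP' z hz
    rw [hgz, zero_sub, norm_neg] at this
    linarith

section Rescaling

variable {E : Type*} [NormedAddCommGroup E] [NormedSpace ℂ E] {D : E × ℂ → ℂ} {n : ℕ}

/-- The paper's `𝒟^{ρ,ξ̂}(λ̂) = ρ^{-(n+1)} D(ρ ξ̂, ρ λ̂)`. -/
noncomputable def rescale (D : E × ℂ → ℂ) (n : ℕ) (ξ : E) (ρ z : ℂ) : ℂ :=
  D (ρ • (ξ, z)) / ρ ^ (n + 1)

lemma eventually_differentiableOn_rescale (hD : AnalyticAt ℂ D 0) (ξ : E) (S : ℝ) :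
    ∀ᶠ ρ in 𝓝 (0 : ℂ), DifferentiableOn ℂ (rescale D n ξ ρ) (closedBall 0 S) := by
  obtain ⟨r, hr, hball⟩ := Metric.eventually_nhds_iff.1 hD.eventually_analyticAt
  have hsmall : ∀ᶠ ρ in 𝓝 (0 : ℂ), ‖ρ‖ * max ‖ξ‖ S < r := by
    simpa using (tendsto_norm_zero.mul_const (max ‖ξ‖ S)).eventually (gt_mem_nhds (by simpa))
  filter_upwards [hsmall] with ρ hρ z hz
  have hzξ : ‖(ξ, z)‖ ≤ max ‖ξ‖ S := by
    rw [Prod.norm_mk]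
    exact max_le_max le_rfl (mem_closedBall_zero_iff.1 hz)
  have hAn : AnalyticAt ℂ D (ρ • (ξ, z)) := hball <| by
    rw [dist_zero_right, norm_smul]
    exact (mul_le_mul_of_nonneg_left hzξ (norm_nonneg ρ)).trans_lt hρ
  exact ((hAn.differentiableAt.comp z (by fun_prop)).div_const _).differentiableWithinAt

lemma norm_rescale_sub_le {Δ : E → ℂ → ℂ}
    (hhom : ∀ (t : ℂ) (ξ : E) (l : ℂ), Δ (t • ξ) (t * l) = t ^ (n + 1) * Δ ξ l) {C r : ℝ}
    (hO : ∀ p : E × ℂ, ‖p‖ ≤ r → ‖D p - Δ p.1 p.2‖ ≤ C * ‖p‖ ^ (n + 2)) {ρ : ℂ} (hρ : ρ ≠ 0)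
    {ξ : E} {z : ℂ} (hp : ‖ρ‖ * ‖(ξ, z)‖ ≤ r) :
    ‖rescale D n ξ ρ z - Δ ξ z‖ ≤ C * ‖ρ‖ * ‖(ξ, z)‖ ^ (n + 2) := by
  have hsub : rescale D n ξ ρ z - Δ ξ z
      = (D (ρ • (ξ, z)) - Δ (ρ • (ξ, z)).1 (ρ • (ξ, z)).2) / ρ ^ (n + 1) := by
    simp only [rescale, Prod.smul_mk, smul_eq_mul, hhom]
    field_simp
  rw [hsub, norm_div, norm_pow, div_le_iff₀ (by positivity)]
  calc ‖D (ρ • (ξ, z)) - Δ (ρ • (ξ, z)).1 (ρ • (ξ, z)).2‖ ≤ C * ‖ρ • (ξ, z)‖ ^ (n + 2) :=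
        hO _ (by rwa [norm_smul])
    _ = C * ‖ρ‖ * ‖(ξ, z)‖ ^ (n + 2) * ‖ρ‖ ^ (n + 1) := by rw [norm_smul]; ring

lemma eventually_norm_rescale_sub_le {Δ : E → ℂ → ℂ}
    (hhom : ∀ (t : ℂ) (ξ : E) (l : ℂ), Δ (t • ξ) (t * l) = t ^ (n + 1) * Δ ξ l) {C r : ℝ}
    (hO : ∀ p : E × ℂ, ‖p‖ ≤ r → ‖D p - Δ p.1 p.2‖ ≤ C * ‖p‖ ^ (n + 2)) (hC : 0 ≤ C)
    (hr : 0 < r) (ξ : E) (S : ℝ) {η : ℝ} (hη : 0 < η) :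
    ∀ᶠ ρ in 𝓝[≠] (0 : ℂ), ∀ z ∈ closedBall (0 : ℂ) S, ‖rescale D n ξ ρ z - Δ ξ z‖ ≤ η := by
  set L := max ‖ξ‖ S
  have hL : Tendsto (fun ρ : ℂ => ‖ρ‖ * L) (𝓝 0) (𝓝 0) := by
    simpa using tendsto_norm_zero.mul_const L
  have hr' : ∀ᶠ ρ in 𝓝 (0 : ℂ), ‖ρ‖ * L < r := hL.eventually (gt_mem_nhds hr)
  have hη' : ∀ᶠ ρ in 𝓝 (0 : ℂ), C * (‖ρ‖ * L) * L ^ (n + 1) < η := by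
    simpa using ((hL.const_mul C).mul_const (L ^ (n + 1))).eventually (gt_mem_nhds (by simpa))
  filter_upwards [nhdsWithin_le_nhds hr', nhdsWithin_le_nhds hη', self_mem_nhdsWithin]
    with ρ hρr hρη hρ z hz
  have hzξ : ‖(ξ, z)‖ ≤ L := by
    rw [Prod.norm_mk]
    exact max_le_max le_rfl (mem_closedBall_zero_iff.1 hz)
  calc ‖rescale D n ξ ρ z - Δ ξ z‖ ≤ C * ‖ρ‖ * ‖(ξ, z)‖ ^ (n + 2) :=
        norm_rescale_sub_le hhom hO hρ
          ((mul_le_mul_of_nonneg_left hzξ (norm_nonneg ρ)).trans hρr.le)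
    _ ≤ C * ‖ρ‖ * L ^ (n + 2) := by gcongr
    _ ≤ η := by rw [pow_succ' L]; linarith

end Rescaling

/-- Rouché/Hurwitz argument: if `D = Δ + O(|(ξ,λ)|^{n+2})` near the origin,
with `Δ` homogeneous of degree `n+1` and of exact degree `n+1` in `λ` in each
unit direction `ξ̂`, then for each `ξ̂` and small `ρ > 0`, the zeros of
`λ̂ ↦ D(ρξ̂, ρλ̂)` in a fixed large disk number `n+1` and converge, as
`ρ → 0`, to the roots of `Δ(ξ̂, ·)`. -/
theorem stmt_11 (d n : ℕ) (D : (Fin d → ℂ) × ℂ → ℂ)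
    (Δ : (Fin d → ℂ) → ℂ → ℂ)
    (hD : AnalyticAt ℂ D 0)
    (hhom : ∀ (t : ℂ) (ξ : Fin d → ℂ) (l : ℂ),
      Δ (t • ξ) (t * l) = t ^ (n + 1) * Δ ξ l)
    (hO : ∃ C r : ℝ, 0 < C ∧ 0 < r ∧ ∀ p : (Fin d → ℂ) × ℂ,
      ‖p‖ ≤ r → ‖D p - Δ p.1 p.2‖ ≤ C * ‖p‖ ^ (n + 2))
    (hdeg : ∀ ξh : EuclideanSpace ℝ (Fin d), ‖ξh‖ = 1 →
      ∃ P : Polynomial ℂ, P.degree = (n + 1 : ℕ) ∧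
        ∀ l : ℂ, P.eval l = Δ (fun i => (ξh i : ℂ)) l) :
    ∀ ξh : EuclideanSpace ℝ (Fin d), ‖ξh‖ = 1 →
      ∃ R : ℝ, 0 < R ∧
        (∀ l : ℂ, Δ (fun i => (ξh i : ℂ)) l = 0 → ‖l‖ < R) ∧
        ∀ ε : ℝ, 0 < ε → ∃ ρ₀ : ℝ, 0 < ρ₀ ∧ ∀ ρ : ℝ, 0 < ρ → ρ < ρ₀ →
          ∃ z : Fin (n + 1) → ℂ,
            (∀ i, ‖z i‖ ≤ R ∧
              D (fun j => ((ρ * ξh j : ℝ) : ℂ), (ρ : ℂ) * z i) = 0 ∧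
              ∃ w : ℂ, Δ (fun i => (ξh i : ℂ)) w = 0 ∧ dist (z i) w < ε) ∧
            (∀ w : ℂ, ‖w‖ ≤ R →
              D (fun j => ((ρ * ξh j : ℝ) : ℂ), (ρ : ℂ) * w) = 0 →
              ∃ i, z i = w) := by
  intro ξh hξ
  obtain ⟨P, hPdeg, hPΔ⟩ := hdeg ξh hξ
  set ξ : Fin d → ℂ := fun i => (ξh i : ℂ)
  have hPn : P.natDegree = n + 1 := natDegree_eq_of_degree_eq_some hPdeg
  obtain ⟨R, hR0, hR⟩ :=
    P.exists_pos_forall_isRoot_norm_lt (ne_zero_of_natDegree_gt (n := 0) (by omega))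
  have hroot : ∀ l, Δ ξ l = 0 ↔ P.IsRoot l := fun l => by rw [IsRoot.def, hPΔ]
  refine ⟨R, hR0, fun l hl => hR l ((hroot l).1 hl), fun ε hε => ?_⟩
  obtain ⟨S, η, hη, hzeros⟩ := P.exists_forall_zeros_near_roots (by omega) hR hε
  obtain ⟨C, r, hC, hr, hO⟩ := hO
  obtain ⟨ρ₀, hρ₀, hsmall⟩ := Metric.mem_nhdsWithin_iff.1
    (((eventually_differentiableOn_rescale hD ξ S).filter_mono nhdsWithin_le_nhds).and
      (eventually_norm_rescale_sub_le hhom hO hC.le hr ξ S hη))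
  refine ⟨ρ₀, hρ₀, fun ρ hρ hρρ₀ => ?_⟩
  obtain ⟨hdiff, hclose⟩ : _ ∧ _ :=
    @hsmall (ρ : ℂ) ⟨by simpa [abs_of_pos hρ] using hρρ₀, by simpa using hρ.ne'⟩
  have hD_eq : ∀ w, D (fun j => ((ρ * ξh j : ℝ) : ℂ), (ρ : ℂ) * w) = 0 ↔
      rescale D n ξ ρ w = 0 := fun w => by
    rw [rescale, div_eq_zero_iff, or_iff_left (pow_ne_zero _ (by exact_mod_cast hρ.ne'))]
    exact Iff.of_eq (congrArg (D · = 0) (by ext <;> simp [ξ]))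
  obtain ⟨hexists, hnear, hcard⟩ :=
    hzeros _ hdiff fun z hz => by simpa only [hPΔ] using hclose z hz
  obtain ⟨z, hz⟩ := Set.exists_range_eq_of_forall_finset_card_le
    (Z := {w | ‖w‖ ≤ R ∧ rescale D n ξ ρ w = 0}) hexists fun T hT => hPn ▸ hcard T hT
  have hzZ : ∀ i, ‖z i‖ ≤ R ∧ rescale D n ξ ρ (z i) = 0 := Set.range_subset_iff.1 hz.subset
  refine ⟨z, fun i => ⟨(hzZ i).1, (hD_eq _).2 (hzZ i).2, ?_⟩, fun w hw hDw => ?_⟩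
  · obtain ⟨w, hw, hdist⟩ := hnear _ (hzZ i).1 (hzZ i).2
    exact ⟨w, (hroot w).2 hw, hdist⟩
  · exact hz.symm.subset ⟨hw, (hD_eq w).1 hDw⟩
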